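/- arXiv:2602.00778 — 3 statements merged into one kernel-verified Lean document; each statement's English description precedes it below -/
import Mathlib

section
/- Let G be a group and k a natural number. A relation R ⊆ G^k is preserved (componentwise) by the operation m : G^3 → G defined by m(x,y,z) = x * y⁻¹ * z if and only if R is a coset of a subgroup of the product group G^k, i.e., R = g • H for some g ∈ G^k and some subgroup H of G^k. -/
open Pointwise

theorem stmt_0 {G : Type*} [Group G] (k : ℕ) (R : Set (Fin k → G)) (hR : R.Nonempty) :
    (∀ x ∈ R, ∀ y ∈ R, ∀ z ∈ R, (fun i => x i * (y i)⁻¹ * z i) ∈ R) ↔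
      ∃ (g : Fin k → G) (H : Subgroup (Fin k → G)), R = g • (H : Set (Fin k → G)) := by
  constructor
  · intro hm
    obtain ⟨g, hg⟩ := hR
    have hm' : ∀ x ∈ R, ∀ y ∈ R, ∀ z ∈ R, x * y⁻¹ * z ∈ R := by
      intro x hx y hy z hz
      exact hm x hx y hy z hz
    refine ⟨g, {
      carrier := {h | g * h ∈ R}
      one_mem' := by simpa using hg
      mul_mem' := by
        intro a b ha hb
        have := hm' (g * a) ha g hg (g * b) hb
        simpa [mul_assoc] using this
      inv_mem' := by
        intro a ha
        have := hm' g hg (g * a) ha g hg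
        simpa [mul_assoc] using this }, ?_⟩
    ext r
    simp only [Set.mem_smul_set]
    constructor
    · intro hr
      exact ⟨g⁻¹ * r, by simpa using hr, by simp⟩
    · rintro ⟨h, hh, rfl⟩
      exact hh
  · rintro ⟨g, H, rfl⟩
    intro x hx y hy z hz
    obtain ⟨a, ha, rfl⟩ := hx
    obtain ⟨b, hb, rfl⟩ := hy
    obtain ⟨c, hc, rfl⟩ := hz
    refine ⟨a * b⁻¹ * c, H.mul_mem (H.mul_mem ha (H.inv_mem hb)) hc, ?_⟩
    funext i
    simp [mul_assoc]
end

section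
/- Suppose the edge set E of a finite simple graph Γ = (V,E) can be partitioned into a matching M and the edge set of a bipartite graph with parts C and D (V = C ∪ D disjoint, and edges within C or within D all belong to M). Let m ≥ 1 with |C| ≤ 2m and |D| ≤ 2m. Then there is an injection f : V → D_{4m} such that every edge {u,v} ∈ E maps to a two-element coset of an order-two subgroup of D_{4m}: f(C) ⊆ ⟨d⟩, f(D) ⊆ s⟨d⟩, and for each matching edge {u,v} with u,v both in C or both in D, f(u) = f(v)·d^m. -/
open Classical in
lemma lemmaA : ∀ (n : ℕ) (α : Type*) [Fintype α] (σ : α → α), Function.Involutive σ →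
    Fintype.card α ≤ 2 * n →
    ∃ f : α → Fin n × Bool, Function.Injective f ∧
      ∀ a, σ a ≠ a → f (σ a) = ((f a).1, !(f a).2) := by
  intro n
  induction n with
  | zero =>
    intro α _ σ hσ hcard
    haveI : IsEmpty α := Fintype.card_eq_zero_iff.mp (Nat.le_zero.mp hcard)
    exact ⟨isEmptyElim, fun a => isEmptyElim a, fun a => isEmptyElim a⟩
  | succ n ih =>
    intro α _ σ hσ hcard
    by_cases hex : ∃ a, σ a ≠ a
    · obtain ⟨a, ha⟩ := hex
      have hane : a ≠ σ a := Ne.symm ha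
      have hmemσ : ∀ x : α, x ≠ a → x ≠ σ a → (σ x ≠ a ∧ σ x ≠ σ a) := by
        intro x h1 h2
        refine ⟨fun h => h2 (by rw [← hσ x, h]), fun h => h1 (hσ.injective h)⟩
      let β := {x : α // x ≠ a ∧ x ≠ σ a}
      let σ' : β → β := fun x => ⟨σ x.1, hmemσ x.1 x.2.1 x.2.2⟩
      have hσ' : Function.Involutive σ' := fun x => Subtype.ext (hσ x.1)
      have hcardβ : Fintype.card β ≤ 2 * n := by
        have h1 : Fintype.card β = Fintype.card α - 2 := by
          have hc : Fintype.card β = (Finset.univ.filter (fun x : α => x ≠ a ∧ x ≠ σ a)).card := by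
            simp [β, Fintype.card_subtype]
          rw [hc]
          have hfil : Finset.univ.filter (fun x : α => x ≠ a ∧ x ≠ σ a)
              = Finset.univ \ {a, σ a} := by
            ext x; simp [and_comm]
          rw [hfil, Finset.card_sdiff_of_subset (by simp)]
          simp [Finset.card_pair hane]
        omega
      obtain ⟨f', hinj', hcond'⟩ := ih β σ' hσ' hcardβ
      set F : α → Fin (n+1) × Bool := fun x =>
        if hx : x = a then (Fin.last n, false)
        else if hx2 : x = σ a then (Fin.last n, true)
        else ((f' ⟨x, hx, hx2⟩).1.castSucc, (f' ⟨x, hx, hx2⟩).2) with hF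
      have hFa : F a = (Fin.last n, false) := by simp [hF]
      have hFsa : F (σ a) = (Fin.last n, true) := by simp [hF, ha]
      have hFo : ∀ (x : α) (h1 : x ≠ a) (h2 : x ≠ σ a),
          F x = ((f' ⟨x, h1, h2⟩).1.castSucc, (f' ⟨x, h1, h2⟩).2) := by
        intro x h1 h2; simp [hF, h1, h2]
      refine ⟨F, ?_, ?_⟩
      · intro x y hxy
        rcases eq_or_ne x a with hx | hx
        · rcases eq_or_ne y a with hy | hy
          · exact hx.trans hy.symm
          · exfalso; rw [hx, hFa] at hxy
            rcases eq_or_ne y (σ a) with hy2 | hy2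
            · rw [hy2, hFsa] at hxy; simp at hxy
            · rw [hFo y hy hy2] at hxy
              exact (Fin.castSucc_lt_last _).ne (congrArg Prod.fst hxy).symm
        rcases eq_or_ne x (σ a) with hx2 | hx2
        · rcases eq_or_ne y a with hy | hy
          · exfalso; rw [hx2, hFsa, hy, hFa] at hxy; simp at hxy
          rcases eq_or_ne y (σ a) with hy2 | hy2
          · exact hx2.trans hy2.symm
          · exfalso; rw [hx2, hFsa, hFo y hy hy2] at hxy
            exact (Fin.castSucc_lt_last _).ne (congrArg Prod.fst hxy).symm
        · rcases eq_or_ne y a with hy | hy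
          · exfalso; rw [hy, hFa, hFo x hx hx2] at hxy
            exact (Fin.castSucc_lt_last _).ne (congrArg Prod.fst hxy)
          rcases eq_or_ne y (σ a) with hy2 | hy2
          · exfalso; rw [hy2, hFsa, hFo x hx hx2] at hxy
            exact (Fin.castSucc_lt_last _).ne (congrArg Prod.fst hxy)
          · rw [hFo x hx hx2, hFo y hy hy2] at hxy
            have heq : f' ⟨x, hx, hx2⟩ = f' ⟨y, hy, hy2⟩ := by
              simp only [Prod.ext_iff] at hxy ⊢
              exact ⟨Fin.castSucc_injective _ hxy.1, hxy.2⟩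
            exact Subtype.ext_iff.mp (hinj' heq)
      · intro x hx
        rcases eq_or_ne x a with h1 | h1
        · rw [h1, hFa, hFsa]; rfl
        rcases eq_or_ne x (σ a) with h2 | h2
        · rw [h2, hσ a, hFa, hFsa]; rfl
        · obtain ⟨hs1, hs2⟩ := hmemσ x h1 h2
          rw [hFo x h1 h2, hFo (σ x) hs1 hs2]
          have hb : σ' ⟨x, h1, h2⟩ ≠ ⟨x, h1, h2⟩ := fun h => hx (congrArg Subtype.val h)
          have hc := hcond' ⟨x, h1, h2⟩ hb
          have heq : (⟨σ x, hs1, hs2⟩ : β) = σ' ⟨x, h1, h2⟩ := rfl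
          rw [heq, hc]
    · push_neg at hex
      have hle : Fintype.card α ≤ Fintype.card (Fin (n+1) × Bool) := by simp; omega
      obtain ⟨e⟩ := Function.Embedding.nonempty_iff_card_le.mpr hle
      exact ⟨e, e.injective, fun a h => absurd (hex a) h⟩

noncomputable def myEncode (m : ℕ) (p : Fin m × Bool) : ZMod (2 * m) :=
  if p.2 then (((p.1 : ℕ) + m : ℕ) : ZMod (2 * m)) else ((p.1 : ℕ) : ZMod (2 * m))

lemma myEncode_val (m : ℕ) (hm : 1 ≤ m) (p : Fin m × Bool) :
    (myEncode m p).val = (p.1 : ℕ) + if p.2 then m else 0 := by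
  obtain ⟨i, c⟩ := p
  have hi := i.isLt
  cases c
  · show (((i : ℕ) : ZMod (2 * m))).val = _
    rw [ZMod.val_natCast_of_lt (by omega)]; simp
  · show ((((i : ℕ) + m : ℕ)) : ZMod (2 * m)).val = _
    rw [ZMod.val_natCast_of_lt (by omega)]; simp

lemma myEncode_injective (m : ℕ) (hm : 1 ≤ m) : Function.Injective (myEncode m) := by
  intro ⟨j, b⟩ ⟨j', b'⟩ h
  have h2 := congrArg ZMod.val h
  rw [myEncode_val m hm, myEncode_val m hm] at h2
  simp only at h2
  have hj := j.isLt; have hj' := j'.isLt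
  cases b <;> cases b' <;> simp_all [Fin.ext_iff] <;> omega

lemma myEncode_flip (m : ℕ) (p : Fin m × Bool) :
    myEncode m (p.1, !p.2) = myEncode m p + (m : ZMod (2 * m)) := by
  obtain ⟨i, c⟩ := p
  cases c
  · show ((((i : ℕ) + m : ℕ)) : ZMod (2 * m)) = ((i : ℕ) : ZMod (2 * m)) + m
    push_cast; ring
  · show (((i : ℕ) : ZMod (2 * m))) = (((i : ℕ) + m : ℕ) : ZMod (2 * m)) + m
    push_cast
    have h0 : ((2 * m : ℕ) : ZMod (2 * m)) = 0 := ZMod.natCast_self _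
    push_cast at h0
    linear_combination -h0

open Classical in
lemma lemmaB {V : Type*} [Fintype V] (m : ℕ) (hm : 1 ≤ m) (S : Set V)
    (hS : S.ncard ≤ 2 * m) (M : Set (Sym2 V))
    (hdiag : ∀ v : V, s(v, v) ∉ M)
    (hmatch : ∀ e ∈ M, ∀ e' ∈ M, e ≠ e' → ∀ v : V, ¬ (v ∈ e ∧ v ∈ e')) :
    ∃ g : S → ZMod (2 * m), Function.Injective g ∧
      ∀ u v : S, s((u : V), (v : V)) ∈ M → g u = g v + (m : ZMod (2 * m)) := by
  haveI : Fintype S := Fintype.ofFinite S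
  let σ : S → S := fun v => if h : ∃ u : S, s((v : V), (u : V)) ∈ M then h.choose else v
  have hkey : ∀ v u : S, s((v : V), (u : V)) ∈ M → σ v = u := by
    intro v u hvu
    have hex : ∃ u' : S, s((v : V), (u' : V)) ∈ M := ⟨u, hvu⟩
    have hch := hex.choose_spec
    have h1 : σ v = hex.choose := dif_pos hex
    rw [h1]
    have hedge : s((v : V), (hex.choose : V)) = s((v : V), (u : V)) := by
      by_contra hne2
      exact hmatch _ hch _ hvu hne2 v ⟨Sym2.mem_mk_left _ _, Sym2.mem_mk_left _ _⟩
    exact Subtype.ext (Sym2.congr_right.mp hedge)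
  have hσ : Function.Involutive σ := by
    intro v
    by_cases h : ∃ u : S, s((v : V), (u : V)) ∈ M
    · have h1 : σ v = h.choose := dif_pos h
      have hsp := h.choose_spec
      rw [h1]
      exact hkey h.choose v (by rwa [Sym2.eq_swap] at hsp)
    · have h1 : σ v = v := dif_neg h
      rw [h1, h1]
  have hcard : Fintype.card S ≤ 2 * m := by
    rw [← Nat.card_eq_fintype_card, Nat.card_coe_set_eq]; exact hS
  obtain ⟨f, hinj, hcond⟩ := lemmaA m S σ hσ hcard
  refine ⟨fun v => myEncode m (f v), fun x y h => hinj (myEncode_injective m hm h), ?_⟩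
  intro u v huv
  have h1 : σ v = u := hkey v u (by rwa [Sym2.eq_swap] at huv)
  have hne : σ v ≠ v := by
    rw [h1]
    intro h2
    exact hdiag _ (by rw [← congrArg Subtype.val h2] at huv; exact huv)
  have hc := hcond v hne
  rw [h1] at hc
  calc myEncode m (f u) = myEncode m ((f v).1, !(f v).2) := by rw [← hc]
    _ = myEncode m (f v) + (m : ZMod (2 * m)) := myEncode_flip m (f v)

theorem stmt_15 {V : Type*} [Fintype V] [DecidableEq V] (Γ : SimpleGraph V)
    (m : ℕ) (hm : 1 ≤ m) (C D : Set V) (hdisj : Disjoint C D) (hcover : C ∪ D = Set.univ)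
    (hC : C.ncard ≤ 2 * m) (hD : D.ncard ≤ 2 * m)
    (M : Set (Sym2 V)) (hME : M ⊆ Γ.edgeSet)
    (hmatch : ∀ e ∈ M, ∀ e' ∈ M, e ≠ e' → ∀ v : V, ¬ (v ∈ e ∧ v ∈ e'))
    (hbip : ∀ u v : V, Γ.Adj u v → s(u, v) ∉ M → (u ∈ C ∧ v ∈ D) ∨ (u ∈ D ∧ v ∈ C)) :
    ∃ f : V → DihedralGroup (2 * m),
      Function.Injective f ∧
      (∀ v ∈ C, ∃ k : ZMod (2 * m), f v = DihedralGroup.r k) ∧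
      (∀ v ∈ D, ∃ l : ZMod (2 * m), f v = DihedralGroup.sr l) ∧
      (∀ u v : V, s(u, v) ∈ M → ((u ∈ C ∧ v ∈ C) ∨ (u ∈ D ∧ v ∈ D)) →
        f u = f v * DihedralGroup.r (m : ZMod (2 * m))) := by
  classical
  have hdiag : ∀ v : V, s(v, v) ∉ M := fun v h => Γ.irrefl (hME h)
  obtain ⟨gC, hgCinj, hgC⟩ := lemmaB m hm C hC M hdiag hmatch
  obtain ⟨gD, hgDinj, hgD⟩ := lemmaB m hm D hD M hdiag hmatch
  have hmemD : ∀ v : V, v ∉ C → v ∈ D := by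
    intro v hv
    have h1 : v ∈ C ∪ D := by rw [hcover]; exact Set.mem_univ v
    exact h1.resolve_left hv
  set F : V → DihedralGroup (2 * m) := fun v =>
    if h : v ∈ C then DihedralGroup.r (gC ⟨v, h⟩)
    else DihedralGroup.sr (gD ⟨v, hmemD v h⟩) with hF
  have hFC : ∀ (v : V) (h : v ∈ C), F v = DihedralGroup.r (gC ⟨v, h⟩) := by
    intro v h; simp [hF, h]
  have hFD : ∀ (v : V) (h : v ∈ D), F v = DihedralGroup.sr (gD ⟨v, h⟩) := by
    intro v h
    have hnc : v ∉ C := fun hc => hdisj.ne_of_mem hc h rfl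
    simp [hF, hnc]
  refine ⟨F, ?_, ?_, ?_, ?_⟩
  · intro x y hxy
    by_cases hx : x ∈ C <;> by_cases hy : y ∈ C
    · rw [hFC x hx, hFC y hy] at hxy
      have := hgCinj (by injection hxy)
      exact congrArg Subtype.val this
    · rw [hFC x hx, hFD y (hmemD y hy)] at hxy; exact absurd hxy (by simp)
    · rw [hFD x (hmemD x hx), hFC y hy] at hxy; exact absurd hxy (by simp)
    · rw [hFD x (hmemD x hx), hFD y (hmemD y hy)] at hxy
      have := hgDinj (by injection hxy)
      exact congrArg Subtype.val this
  · intro v hv; exact ⟨gC ⟨v, hv⟩, hFC v hv⟩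
  · intro v hv; exact ⟨gD ⟨v, hv⟩, hFD v hv⟩
  · intro u v huv hcc
    rcases hcc with ⟨hu, hv⟩ | ⟨hu, hv⟩
    · rw [hFC u hu, hFC v hv]
      have := hgC ⟨u, hu⟩ ⟨v, hv⟩ huv
      rw [this]
      simp [DihedralGroup.r_mul_r]
    · rw [hFD u hu, hFD v hv]
      have := hgD ⟨u, hu⟩ ⟨v, hv⟩ huv
      rw [this]
      simp [DihedralGroup.sr_mul_r]
end

section
/- Let Γ be a finite simple graph and suppose E(Γ) = M ⊔ B, where M is a matching and (V, B) is a bipartite graph. If x and y are adjacent vertices with three distinct common neighbors u₁, u₂, u₃, then the edge {x,y} belongs to M. -/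
theorem stmt_17 {V : Type*} (Γ : SimpleGraph V)
    (M B : Set (Sym2 V)) (hpart : Γ.edgeSet = M ∪ B) (hdisj : Disjoint M B)
    (hmatch : ∀ e ∈ M, ∀ e' ∈ M, e ≠ e' → ∀ v : V, ¬ (v ∈ e ∧ v ∈ e'))
    (c : V → Bool) (hbip : ∀ u v : V, s(u, v) ∈ B → c u ≠ c v)
    (x y u₁ u₂ u₃ : V) (hxy : Γ.Adj x y)
    (hu12 : u₁ ≠ u₂) (hu13 : u₁ ≠ u₃) (hu23 : u₂ ≠ u₃)
    (h1 : Γ.Adj x u₁ ∧ Γ.Adj y u₁) (h2 : Γ.Adj x u₂ ∧ Γ.Adj y u₂)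
    (h3 : Γ.Adj x u₃ ∧ Γ.Adj y u₃) :
    s(x, y) ∈ M := by
  by_contra hM
  have hmem : s(x, y) ∈ M ∪ B := hpart ▸ hxy
  have hB : s(x, y) ∈ B := hmem.resolve_left hM
  have hcxy : c x ≠ c y := hbip x y hB
  have key : ∀ u : V, Γ.Adj x u → Γ.Adj y u → s(x, u) ∈ M ∨ s(y, u) ∈ M := by
    intro u hx hy
    have hxu : s(x, u) ∈ M ∪ B := hpart ▸ hx
    have hyu : s(y, u) ∈ M ∪ B := hpart ▸ hy
    rcases hxu with h | h
    · exact Or.inl h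
    rcases hyu with h' | h'
    · exact Or.inr h'
    exact absurd (show c x = c y by
      have hxu' := hbip x u h
      have hyu' := hbip y u h'
      cases hcx : c x <;> cases hcy : c y <;> cases hcu : c u <;> simp_all) hcxy
  have D1 := key u₁ h1.1 h1.2
  have D2 := key u₂ h2.1 h2.2
  have D3 := key u₃ h3.1 h3.2
  have hx1 := h1.1.ne
  have hx2 := h2.1.ne
  have hx3 := h3.1.ne
  have hy1 := h1.2.ne
  have hy2 := h2.2.ne
  have hy3 := h3.2.ne
  rcases D1 with d1 | d1 <;> rcases D2 with d2 | d2 <;> rcases D3 with d3 | d3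
  · exact hmatch _ d1 _ d2 (by simp [Sym2.eq_iff]; tauto) x ⟨by simp, by simp⟩
  · exact hmatch _ d1 _ d2 (by simp [Sym2.eq_iff]; tauto) x ⟨by simp, by simp⟩
  · exact hmatch _ d1 _ d3 (by simp [Sym2.eq_iff]; tauto) x ⟨by simp, by simp⟩
  · exact hmatch _ d2 _ d3 (by simp [Sym2.eq_iff]; tauto) y ⟨by simp, by simp⟩
  · exact hmatch _ d2 _ d3 (by simp [Sym2.eq_iff]; tauto) x ⟨by simp, by simp⟩
  · exact hmatch _ d1 _ d3 (by simp [Sym2.eq_iff]; tauto) y ⟨by simp, by simp⟩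
  · exact hmatch _ d1 _ d2 (by simp [Sym2.eq_iff]; tauto) y ⟨by simp, by simp⟩
  · exact hmatch _ d1 _ d2 (by simp [Sym2.eq_iff]; tauto) y ⟨by simp, by simp⟩
end
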